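/- arXiv:1908.02713 — 4 statements merged into one kernel-verified Lean document; each statement's English description precedes it below -/
import Mathlib

section
/- Let T = Σ_{j,k,ℓ ∈ {x,y,z}} ε_{jkℓ} s_j ⊗ s_k ⊗ s_ℓ on (ℂ²)^⊗3, and let τ_y = I/2 + s_y and τ_z = I/2 + s_z. Then for every 2×2 complex matrix ρ, the partial trace over the second and third tensor factors satisfies Tr_R[T, ρ ⊗ τ_y ⊗ τ_z] = (1/4)[s_x, ρ]. Equivalently, for every 2×2 matrix A, Tr[(A ⊗ I ⊗ I) · [T, ρ ⊗ τ_y ⊗ τ_z]] = (1/4) Tr[A [s_x, ρ]]. -/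
open Matrix Kronecker
open scoped ComplexOrder

noncomputable section

/-- Pauli matrices -/
def σx : Matrix (Fin 2) (Fin 2) ℂ := !![0, 1; 1, 0]
def σy : Matrix (Fin 2) (Fin 2) ℂ := !![0, -Complex.I; Complex.I, 0]
def σz : Matrix (Fin 2) (Fin 2) ℂ := !![1, 0; 0, -1]

/-- spin operators `s_x, s_y, s_z` (with ℏ = 1), indexed by `0 = x`, `1 = y`, `2 = z`. -/
def spin : Fin 3 → Matrix (Fin 2) (Fin 2) ℂ := fun j => (2 : ℂ)⁻¹ • (![σx, σy, σz] j)

/-- Levi-Civita symbol on indices `0,1,2` (i.e. `x,y,z`). -/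
def εLC (j k l : Fin 3) : ℂ :=
  ((((k : ℤ) - (j : ℤ)) * (((l : ℤ) - (j : ℤ)) * ((l : ℤ) - (k : ℤ))) : ℤ) : ℂ) / 2

/-- The rotationally invariant 3-qubit interaction `T = Σ ε_{jkl} s_j ⊗ s_k ⊗ s_l`. -/
def T : Matrix ((Fin 2 × Fin 2) × Fin 2) ((Fin 2 × Fin 2) × Fin 2) ℂ :=
  ∑ j : Fin 3, ∑ k : Fin 3, ∑ l : Fin 3, εLC j k l • (spin j ⊗ₖ spin k ⊗ₖ spin l)

/-- Total spin component `S_k^tot` on three qubits. -/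
def Stot (k : Fin 3) : Matrix ((Fin 2 × Fin 2) × Fin 2) ((Fin 2 × Fin 2) × Fin 2) ℂ :=
  spin k ⊗ₖ (1 : Matrix (Fin 2) (Fin 2) ℂ) ⊗ₖ (1 : Matrix (Fin 2) (Fin 2) ℂ)
    + (1 : Matrix (Fin 2) (Fin 2) ℂ) ⊗ₖ spin k ⊗ₖ (1 : Matrix (Fin 2) (Fin 2) ℂ)
    + (1 : Matrix (Fin 2) (Fin 2) ℂ) ⊗ₖ (1 : Matrix (Fin 2) (Fin 2) ℂ) ⊗ₖ spin k

/-- `τ_j = I/2 + s_j`, the density matrix of a spin-1/2 particle polarized in the `+j` direction. -/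
def τ (j : Fin 3) : Matrix (Fin 2) (Fin 2) ℂ := (2 : ℂ)⁻¹ • 1 + spin j

/-- Partial trace over the second and third tensor factors. -/
def ptraceR (M : Matrix ((Fin 2 × Fin 2) × Fin 2) ((Fin 2 × Fin 2) × Fin 2) ℂ) :
    Matrix (Fin 2) (Fin 2) ℂ :=
  Matrix.of fun i j => ∑ b : Fin 2, ∑ c : Fin 2, M ((i, b), c) ((j, b), c)

/-- Trace norm `‖A‖₁ = Tr √(A†A)`. -/
def traceNorm {n : Type*} [Fintype n] [DecidableEq n] (A : Matrix n n ℂ) : ℝ :=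
  (((Matrix.posSemidef_conjTranspose_mul_self A).1.eigenvectorUnitary.1 *
      diagonal ((fun x : ℝ => (x : ℂ)) ∘ (fun x => √x) ∘
        (Matrix.posSemidef_conjTranspose_mul_self A).1.eigenvalues) *
      (star (Matrix.posSemidef_conjTranspose_mul_self A).1.eigenvectorUnitary :
        Matrix n n ℂ)).trace).re

/-! Expanding `T`, the partial trace of `[s_j ⊗ s_k ⊗ s_l, ρ ⊗ σ ⊗ τ]` over the last two factors is
`Tr(s_k σ) Tr(s_l τ) [s_j, ρ]`. Since `Tr(s_k τ_j) = δ_{kj}/2`, only `(j, k, l) = (x, y, z)` survives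
against `τ_y ⊗ τ_z`, with weight `ε_{xyz}/4 = 1/4`. The second identity follows from the first
because `Tr((A ⊗ I ⊗ I) M) = Tr(A Tr_R M)`. -/

def ptraceRₗ :
    Matrix ((Fin 2 × Fin 2) × Fin 2) ((Fin 2 × Fin 2) × Fin 2) ℂ →ₗ[ℂ] Matrix (Fin 2) (Fin 2) ℂ where
  toFun := ptraceR
  map_add' M N := by ext; simp [ptraceR, Finset.sum_add_distrib]
  map_smul' c M := by ext; simp [ptraceR, mul_add]

lemma ptraceRₗ_apply (M : Matrix ((Fin 2 × Fin 2) × Fin 2) ((Fin 2 × Fin 2) × Fin 2) ℂ) :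
    ptraceRₗ M = ptraceR M := rfl

lemma ptraceR_kronecker (M N P : Matrix (Fin 2) (Fin 2) ℂ) :
    ptraceR (M ⊗ₖ N ⊗ₖ P) = (N.trace * P.trace) • M := by
  ext i j
  simp only [ptraceR, kroneckerMap_apply, Fin.sum_univ_two, of_apply, trace, diag_apply,
    Matrix.smul_apply, smul_eq_mul]
  ring

lemma ptraceR_commutator_kronecker (a b c ρ σ τ : Matrix (Fin 2) (Fin 2) ℂ) :
    ptraceR ((a ⊗ₖ b ⊗ₖ c) * (ρ ⊗ₖ σ ⊗ₖ τ) - (ρ ⊗ₖ σ ⊗ₖ τ) * (a ⊗ₖ b ⊗ₖ c)) =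
      ((b * σ).trace * (c * τ).trace) • (a * ρ - ρ * a) := by
  rw [← mul_kronecker_mul, ← mul_kronecker_mul, ← mul_kronecker_mul, ← mul_kronecker_mul,
    ← ptraceRₗ_apply, map_sub, ptraceRₗ_apply, ptraceRₗ_apply, ptraceR_kronecker,
    ptraceR_kronecker, trace_mul_comm σ, trace_mul_comm τ, smul_sub]

lemma trace_kronecker_one_one_mul (A : Matrix (Fin 2) (Fin 2) ℂ)
    (M : Matrix ((Fin 2 × Fin 2) × Fin 2) ((Fin 2 × Fin 2) × Fin 2) ℂ) :
    ((A ⊗ₖ (1 : Matrix (Fin 2) (Fin 2) ℂ) ⊗ₖ (1 : Matrix (Fin 2) (Fin 2) ℂ)) * M).trace =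
      (A * ptraceR M).trace := by
  simp only [trace, diag_apply, mul_apply, kroneckerMap_apply, one_apply, mul_ite, mul_one,
    mul_zero, ite_mul, zero_mul, Fintype.sum_prod_type, Finset.sum_ite_eq, Finset.mem_univ,
    if_true, Fin.sum_univ_two, ptraceR, of_apply]
  ring

lemma trace_spin (k : Fin 3) : (spin k).trace = 0 := by
  fin_cases k <;> simp [spin, σx, σy, σz, trace, Fin.sum_univ_two]

lemma trace_spin_mul_spin (k j : Fin 3) :
    (spin k * spin j).trace = if k = j then 2⁻¹ else 0 := by
  fin_cases k <;> fin_cases j <;>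
    norm_num [spin, σx, σy, σz, trace, Fin.sum_univ_two, mul_mul_mul_comm _ Complex.I]

lemma trace_spin_mul_τ (k j : Fin 3) : (spin k * τ j).trace = if k = j then 2⁻¹ else 0 := by
  rw [τ, mul_add, Matrix.mul_smul, mul_one, trace_add, trace_smul, trace_spin, smul_zero, zero_add,
    trace_spin_mul_spin]

lemma ptraceR_commutator_T (ρ σ τ' : Matrix (Fin 2) (Fin 2) ℂ) :
    ptraceR (T * (ρ ⊗ₖ σ ⊗ₖ τ') - (ρ ⊗ₖ σ ⊗ₖ τ') * T) = ∑ j : Fin 3, ∑ k : Fin 3, ∑ l : Fin 3,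
      (εLC j k l * ((spin k * σ).trace * (spin l * τ').trace)) • (spin j * ρ - ρ * spin j) := by
  simp only [T, Finset.sum_mul, Finset.mul_sum, smul_mul_assoc, mul_smul_comm,
    ← Finset.sum_sub_distrib, ← smul_sub, ← ptraceRₗ_apply, map_sum, map_smul]
  simp only [ptraceRₗ_apply, ptraceR_commutator_kronecker, smul_smul]

lemma ptraceR_commutator_T_τ (ρ : Matrix (Fin 2) (Fin 2) ℂ) :
    ptraceR (T * (ρ ⊗ₖ τ 1 ⊗ₖ τ 2) - (ρ ⊗ₖ τ 1 ⊗ₖ τ 2) * T) =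
      (4 : ℂ)⁻¹ • (spin 0 * ρ - ρ * spin 0) := by
  simp only [ptraceR_commutator_T, trace_spin_mul_τ, mul_ite, mul_zero, ite_smul, zero_smul,
    Finset.sum_ite_eq', Finset.mem_univ, if_true, Fin.sum_univ_three]
  norm_num [εLC]

/-- `Tr_R [T, ρ ⊗ τ_y ⊗ τ_z] = (1/4)[s_x, ρ]`, and the equivalent statement in terms of
expectation values of system observables. -/
theorem ptrace_commutator_T (ρ : Matrix (Fin 2) (Fin 2) ℂ) :
    ptraceR (T * (ρ ⊗ₖ τ 1 ⊗ₖ τ 2) - (ρ ⊗ₖ τ 1 ⊗ₖ τ 2) * T) =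
      (4 : ℂ)⁻¹ • (spin 0 * ρ - ρ * spin 0) ∧
    ∀ A : Matrix (Fin 2) (Fin 2) ℂ,
      ((A ⊗ₖ (1 : Matrix (Fin 2) (Fin 2) ℂ) ⊗ₖ (1 : Matrix (Fin 2) (Fin 2) ℂ)) *
          (T * (ρ ⊗ₖ τ 1 ⊗ₖ τ 2) - (ρ ⊗ₖ τ 1 ⊗ₖ τ 2) * T)).trace =
        (4 : ℂ)⁻¹ * (A * (spin 0 * ρ - ρ * spin 0)).trace := by
  refine ⟨ptraceR_commutator_T_τ ρ, fun A => ?_⟩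
  rw [trace_kronecker_one_one_mul, ptraceR_commutator_T_τ, Matrix.mul_smul, trace_smul,
    smul_eq_mul]
end
end

section
/- Let A and B be elements of a complex Banach algebra (a complete normed ring in which the norm is submultiplicative). Then ‖ exp(A) B exp(−A) − B − [A, B] ‖ ≤ ‖B‖ (e^{2‖A‖} − 1 − 2‖A‖), where [A,B] = AB − BA. In particular, if moreover 2‖A‖ ≤ 1, then ‖ exp(A) B exp(−A) − B − [A, B] ‖ ≤ 4 (e − 2) ‖A‖² ‖B‖. -/
/-!
Write `exp (±A) = 1 ± A + R±`. Comparing the exponential series term by term gives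
`‖R±‖ ≤ r := e^‖A‖ - 1 - ‖A‖`. Expanding `exp A * B * exp (-A) - B - [A, B]` leaves the six terms
`R₊B + R₊BR₋ - R₊BA + BR₋ + ABR₋ - ABA`, whose norms add up to
`‖B‖ ((1 + ‖A‖ + r)² - 1 - 2‖A‖) = ‖B‖ (e^{2‖A‖} - 1 - 2‖A‖)`, since `1 + ‖A‖ + r = e^‖A‖`.
For `t ∈ [0, 1]` the series of `e^t - 1 - t` is termwise at most `t²` times that of `e - 2`.
-/

open Nat

section ExpTail

variable {𝔸 : Type*} [NormedRing 𝔸] [CompleteSpace 𝔸]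

theorem hasSum_exp_sub_one_sub (𝕂 : Type*) [RCLike 𝕂] [NormedAlgebra 𝕂 𝔸] (x : 𝔸) :
    HasSum (fun n : ℕ => ((n + 2)! : 𝕂)⁻¹ • x ^ (n + 2)) (NormedSpace.exp x - 1 - x) := by
  simpa [Finset.sum_range_succ, sub_add_eq_sub_sub] using
    (hasSum_nat_add_iff' 2).mpr (NormedSpace.exp_series_hasSum_exp' (𝕂 := 𝕂) x)

theorem Real.hasSum_exp_sub_one_sub (t : ℝ) :
    HasSum (fun n : ℕ => t ^ (n + 2) / (n + 2)!) (Real.exp t - 1 - t) := by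
  simpa [Real.exp_eq_exp_ℝ, div_eq_inv_mul] using _root_.hasSum_exp_sub_one_sub ℝ t

theorem norm_exp_sub_one_sub_le {𝕂 : Type*} [RCLike 𝕂] [NormedAlgebra 𝕂 𝔸] (x : 𝔸) :
    ‖NormedSpace.exp x - 1 - x‖ ≤ Real.exp ‖x‖ - 1 - ‖x‖ := by
  refine (hasSum_exp_sub_one_sub 𝕂 x).norm_le_of_bounded (Real.hasSum_exp_sub_one_sub ‖x‖)
    fun n => ?_
  rw [norm_smul, norm_inv, div_eq_inv_mul]
  gcongr
  · simp
  · exact norm_pow_le' x (by omega)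

end ExpTail

theorem Real.exp_sub_one_sub_le_mul_sq {t : ℝ} (ht₀ : 0 ≤ t) (ht₁ : t ≤ 1) :
    Real.exp t - 1 - t ≤ (Real.exp 1 - 2) * t ^ 2 := by
  have h := hasSum_le (fun n => ?_) (Real.hasSum_exp_sub_one_sub t)
    ((Real.hasSum_exp_sub_one_sub 1).mul_left (t ^ 2))
  · linarith
  · rw [one_pow, mul_one_div]
    exact div_le_div_of_nonneg_right (pow_le_pow_of_le_one ht₀ ht₁ (by omega)) (by positivity)

theorem norm_mul_mul_sub_sub_commutator_le {α : Type*} [SeminormedRing α] (A B E F : α)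
    {a r : ℝ} (hA : ‖A‖ ≤ a) (hE : ‖E - 1 - A‖ ≤ r) (hF : ‖F - 1 + A‖ ≤ r) :
    ‖E * B * F - B - (A * B - B * A)‖ ≤ ‖B‖ * ((1 + a + r) ^ 2 - 1 - 2 * a) := by
  obtain ⟨R, rfl⟩ : ∃ R, E = 1 + A + R := ⟨E - 1 - A, by abel⟩
  obtain ⟨S, rfl⟩ : ∃ S, F = 1 - A + S := ⟨F - 1 + A, by abel⟩
  rw [show 1 + A + R - 1 - A = R by abel] at hE
  rw [show 1 - A + S - 1 + A = S by abel] at hF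
  have ha : 0 ≤ a := (norm_nonneg A).trans hA
  have hr : 0 ≤ r := (norm_nonneg R).trans hE
  have hb := norm_nonneg B
  calc ‖(1 + A + R) * B * (1 - A + S) - B - (A * B - B * A)‖
      = ‖R * B + R * B * S - R * B * A + B * S + A * B * S - A * B * A‖ := by
        congr 1; noncomm_ring
    _ ≤ ‖R * B‖ + ‖R * B * S‖ + ‖R * B * A‖ + ‖B * S‖ + ‖A * B * S‖ + ‖A * B * A‖ := by
        grw [norm_sub_le, norm_add_le, norm_add_le, norm_sub_le, norm_add_le]
    _ ≤ r * ‖B‖ + r * ‖B‖ * r + r * ‖B‖ * a + ‖B‖ * r + a * ‖B‖ * r + a * ‖B‖ * a := by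
        grw [norm_mul₃_le, norm_mul₃_le, norm_mul₃_le, norm_mul₃_le, norm_mul_le, norm_mul_le,
          hA, hA, hE, hF]
    _ = ‖B‖ * ((1 + a + r) ^ 2 - 1 - 2 * a) := by ring

/-- In a complex Banach algebra, `‖exp(A) B exp(-A) - B - [A,B]‖ ≤ ‖B‖(e^{2‖A‖} - 1 - 2‖A‖)`;
in particular, if `2‖A‖ ≤ 1` then this is at most `4(e-2)‖A‖²‖B‖`. -/
theorem conj_exp_first_order {𝔸 : Type*} [NormedRing 𝔸] [NormedAlgebra ℂ 𝔸]
    [CompleteSpace 𝔸] (A B : 𝔸) :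
    ‖NormedSpace.exp A * B * NormedSpace.exp (-A) - B - (A * B - B * A)‖ ≤
      ‖B‖ * (Real.exp (2 * ‖A‖) - 1 - 2 * ‖A‖) ∧
    (2 * ‖A‖ ≤ 1 →
      ‖NormedSpace.exp A * B * NormedSpace.exp (-A) - B - (A * B - B * A)‖ ≤
        4 * (Real.exp 1 - 2) * ‖A‖ ^ 2 * ‖B‖) := by
  have hE := norm_exp_sub_one_sub_le (𝕂 := ℂ) A
  have hF : ‖NormedSpace.exp (-A) - 1 + A‖ ≤ Real.exp ‖A‖ - 1 - ‖A‖ := by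
    simpa using norm_exp_sub_one_sub_le (𝕂 := ℂ) (-A)
  have first := norm_mul_mul_sub_sub_commutator_le A B _ _ le_rfl hE hF
  rw [add_add_sub_cancel, add_sub_cancel, ← Real.exp_nat_mul] at first
  push_cast at first
  refine ⟨first, fun hA => first.trans ?_⟩
  calc ‖B‖ * (Real.exp (2 * ‖A‖) - 1 - 2 * ‖A‖)
      ≤ ‖B‖ * ((Real.exp 1 - 2) * (2 * ‖A‖) ^ 2) := by
        gcongr
        exact Real.exp_sub_one_sub_le_mul_sq (by positivity) hA
    _ = 4 * (Real.exp 1 - 2) * ‖A‖ ^ 2 * ‖B‖ := by ring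
end

section
/- Let d ≥ 2 and K = d² − 1, and let O_0, …, O_{K−1} be nonzero Hermitian d×d complex matrices that are traceless (Tr O_k = 0 for all k) and pairwise Hilbert–Schmidt orthogonal (Tr(O_k O_ℓ) = 0 for k ≠ ℓ), so that together with the identity they form an operator basis of all d×d matrices. Define the totally antisymmetric operator T on the K-fold tensor power of ℂ^d by T = Σ_{π ∈ S_K} sgn(π) · O_{π(0)} ⊗ O_{π(1)} ⊗ … ⊗ O_{π(K−1)} (a matrix indexed by functions Fin K → Fin d, whose ((f),(g)) entry is Σ_π sgn(π) ∏_{r} (O_{π(r)})_{f(r), g(r)}). Then for every k ∈ {0, …, K−1}, T commutes with the extensive operator O_k^tot = Σ_{r=0}^{K−1} (the operator acting as O_k on tensor factor r and as the identity on all other factors): [O_k^tot, T] = 0. -/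
/-!
Write `P(X) = ⊗_r X_r`, so that `T = Σ_π sgn(π) P(O ∘ π)` is the alternatization of the
multilinear map `P`, evaluated at `O`. The commutator with `Σ_r A^{(r)}` acts on tensor products
as a derivation, `[Σ_r A^{(r)}, P(X)] = Σ_r P(X with X_r replaced by [A, X_r])`, and this passes
to the alternatization. For `A = O_k`, expand `[O_k, O_l] = Σ_m c_{lm} O_m` in the orthogonal
basis `{1, O_m}` (no identity component, since commutators are traceless). Since the
alternatization vanishes whenever two arguments coincide, only the diagonal coefficients survive
and the commutator is `(Σ_l c_{ll}) T`; finally `c_{ll} ∝ Tr([O_k, O_l] O_l) = 0` by cyclicity of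
the trace.
-/

open Matrix

noncomputable section

/-- The totally antisymmetric operator
`T = Σ_{π ∈ S_K} sgn(π) O_{π(0)} ⊗ O_{π(1)} ⊗ ... ⊗ O_{π(K-1)}`
on the `K`-fold tensor power of `ℂ^d`, as a matrix indexed by `Fin K → Fin d`. -/
def antisymT (d K : ℕ) (O : Fin K → Matrix (Fin d) (Fin d) ℂ) :
    Matrix (Fin K → Fin d) (Fin K → Fin d) ℂ :=
  Matrix.of fun f g =>
    ∑ π : Equiv.Perm (Fin K), ((Equiv.Perm.sign π : ℤ) : ℂ) * ∏ r, (O (π r)) (f r) (g r)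

/-- The operator acting as `A` on tensor factor `r` and as the identity elsewhere. -/
def embedAt (d K : ℕ) (r : Fin K) (A : Matrix (Fin d) (Fin d) ℂ) :
    Matrix (Fin K → Fin d) (Fin K → Fin d) ℂ :=
  Matrix.of fun f g =>
    A (f r) (g r) * ∏ r' ∈ Finset.univ.erase r, (if f r' = g r' then (1 : ℂ) else 0)

open Finset Function

theorem LinearMap.BilinForm.sum_div_smul_eq_of_iIsOrtho {K V ι : Type*} [Field K]
    [AddCommGroup V] [Module K V] [FiniteDimensional K V] [Fintype ι]
    {B : LinearMap.BilinForm K V} {v : ι → V} (hv : B.iIsOrtho v)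
    (hvv : ∀ i, B (v i) (v i) ≠ 0) (hcard : Fintype.card ι = Module.finrank K V) (x : V) :
    ∑ i, (B x (v i) / B (v i) (v i)) • v i = x := by
  let b := basisOfLinearIndependentOfCardEqFinrank' v (linearIndependent_of_iIsOrtho hv hvv) hcard
  have hb : ⇑b = v := coe_basisOfLinearIndependentOfCardEqFinrank' ..
  have hcoeff : ∀ j, B x (v j) = b.repr x j * B (v j) (v j) := fun j => by
    conv_lhs => rw [← b.sum_repr x]
    rw [map_sum, LinearMap.sum_apply, Finset.sum_eq_single j]
    · simp [hb]
    · intro i _ hij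
      simp [hb, iIsOrtho_def.1 hv i j hij]
    · simp
  conv_rhs => rw [← b.sum_repr x]
  simp only [hcoeff, mul_div_cancel_right₀ _ (hvv _), hb]

theorem AlternatingMap.sum_map_update_sum_smul {R M N ι : Type*} [CommSemiring R]
    [AddCommMonoid M] [Module R M] [AddCommMonoid N] [Module R N] [Fintype ι] [DecidableEq ι]
    (f : M [⋀^ι]→ₗ[R] N) (v : ι → M) (c : ι → ι → R) :
    ∑ j, f (update v j (∑ m, c j m • v m)) = (∑ j, c j j) • f v := by
  rw [Finset.sum_smul]
  refine Finset.sum_congr rfl fun j _ => ?_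
  rw [f.map_update_sum, Finset.sum_eq_single j]
  · rw [f.map_update_smul, update_eq_self]
  · intro m _ hmj
    rw [f.map_update_smul, f.map_update_self v hmj.symm, smul_zero]
  · simp

namespace Matrix

section TraceExpansion

open scoped ComplexOrder

variable {n ι 𝕜 : Type*} [Fintype n] [Fintype ι] [RCLike 𝕜]

theorem IsHermitian.trace_mul_self_ne_zero {A : Matrix n n 𝕜} (hA : A.IsHermitian)
    (h0 : A ≠ 0) : (A * A).trace ≠ 0 := by
  have h := trace_conjTranspose_mul_self_eq_zero_iff.not.mpr h0
  rwa [hA.eq] at h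

theorem eq_sum_trace_mul_div_smul_of_trace_eq_zero [DecidableEq n] {O : ι → Matrix n n 𝕜}
    (hO0 : ∀ k, O k ≠ 0) (hherm : ∀ k, (O k).IsHermitian) (htr : ∀ k, (O k).trace = 0)
    (horth : ∀ k l, k ≠ l → (O k * O l).trace = 0)
    (hcard : Fintype.card ι + 1 = Fintype.card n ^ 2) {C : Matrix n n 𝕜} (hC : C.trace = 0) :
    C = ∑ m, ((C * O m).trace / (O m * O m).trace) • O m := by
  have : Nonempty n := Fintype.card_pos_iff.mp (by nlinarith)
  let B : LinearMap.BilinForm 𝕜 (Matrix n n 𝕜) :=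
    (LinearMap.mul 𝕜 _).compr₂ (traceLinearMap n 𝕜 𝕜)
  have hB : ∀ X Y, B X Y = (X * Y).trace := fun _ _ => rfl
  have hv : B.iIsOrtho (fun i : Option ι => i.elim 1 O) := by
    rw [LinearMap.BilinForm.iIsOrtho_def]
    rintro (_ | i) (_ | j) hij
    · exact absurd rfl hij
    · simpa [hB] using htr j
    · simpa [hB] using htr i
    · exact horth i j (by simpa using hij)
  have hvv : ∀ i : Option ι, B (i.elim 1 O) (i.elim 1 O) ≠ 0 := by
    rintro (_ | i)
    · simp [hB]
    · exact (hherm i).trace_mul_self_ne_zero (hO0 i)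
  have hcard' : Fintype.card (Option ι) = Module.finrank 𝕜 (Matrix n n 𝕜) := by
    simp [Module.finrank_matrix, hcard, sq]
  have hsum := LinearMap.BilinForm.sum_div_smul_eq_of_iIsOrtho hv hvv hcard' C
  simpa [Fintype.sum_option, hB, hC] using hsum.symm

end TraceExpansion

section PiKronecker

variable (R ι n : Type*) [CommSemiring R] [Fintype ι]

def piKronecker : MultilinearMap R (fun _ : ι => Matrix n n R) (Matrix (ι → n) (ι → n) R) :=
  MultilinearMap.pi fun f => MultilinearMap.pi fun g =>
    (MultilinearMap.mkPiAlgebra R ι R).compLinearMap fun r => entryLinearMap R R (f r) (g r)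

variable {R ι n}

@[simp]
theorem piKronecker_apply (X : ι → Matrix n n R) (f g : ι → n) :
    piKronecker R ι n X f g = ∏ r, X r (f r) (g r) :=
  rfl

variable [DecidableEq ι] [Fintype n]

theorem piKronecker_mul (X Y : ι → Matrix n n R) :
    piKronecker R ι n X * piKronecker R ι n Y = piKronecker R ι n (X * Y) := by
  ext f g
  simp only [mul_apply, piKronecker_apply, Pi.mul_apply, Finset.prod_univ_sum,
    Fintype.piFinset_univ, Finset.prod_mul_distrib]

end PiKronecker

section Extensive

variable {R ι n : Type*} [CommRing R] [Fintype ι] [DecidableEq ι] [Fintype n] [DecidableEq n]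

theorem piKronecker_update_one_mul_sub_mul (r : ι) (A : Matrix n n R)
    (X : ι → Matrix n n R) :
    piKronecker R ι n (update 1 r A) * piKronecker R ι n X
        - piKronecker R ι n X * piKronecker R ι n (update 1 r A)
      = piKronecker R ι n (update X r (A * X r - X r * A)) := by
  have hleft : update (1 : ι → Matrix n n R) r A * X = update X r (A * X r) := by
    funext s; rcases eq_or_ne s r with rfl | hs <;> simp [*]
  have hright : X * update (1 : ι → Matrix n n R) r A = update X r (X r * A) := by
    funext s; rcases eq_or_ne s r with rfl | hs <;> simp [*]
  rw [piKronecker_mul, piKronecker_mul, hleft, hright, MultilinearMap.map_update_sub]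

theorem sum_piKronecker_update_one_mul_alternatization_sub (A : Matrix n n R)
    (X : ι → Matrix n n R) :
    (∑ r, piKronecker R ι n (update 1 r A)) * (piKronecker R ι n).alternatization X
        - (piKronecker R ι n).alternatization X * ∑ r, piKronecker R ι n (update 1 r A)
      = ∑ j, (piKronecker R ι n).alternatization (update X j (A * X j - X j * A)) := by
  set P := piKronecker R ι n
  set E := fun r => P (update 1 r A)
  have hterm : ∀ (σ : Equiv.Perm ι) r, E r * P (fun i => X (σ i)) - P (fun i => X (σ i)) * E r
      = P (fun i => update X (σ r) (A * X (σ r) - X (σ r) * A) (σ i)) := fun σ r => by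
    rw [piKronecker_update_one_mul_sub_mul]
    congr 1
    funext i
    rw [update_apply_equiv_apply, Equiv.symm_apply_apply]
    rfl
  calc (∑ r, E r) * P.alternatization X - P.alternatization X * ∑ r, E r
      = ∑ r, ∑ σ : Equiv.Perm ι, Equiv.Perm.sign σ •
          P (fun i => update X (σ r) (A * X (σ r) - X (σ r) * A) (σ i)) := by
        rw [Finset.sum_mul, Finset.mul_sum, ← Finset.sum_sub_distrib]
        refine Finset.sum_congr rfl fun r _ => ?_
        rw [MultilinearMap.alternatization_apply, Finset.mul_sum, Finset.sum_mul,
          ← Finset.sum_sub_distrib]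
        refine Finset.sum_congr rfl fun σ _ => ?_
        rw [MultilinearMap.domDomCongr_apply, mul_smul_comm, smul_mul_assoc, ← smul_sub, hterm]
    _ = ∑ j, P.alternatization (update X j (A * X j - X j * A)) := by
        simp only [MultilinearMap.alternatization_apply, MultilinearMap.domDomCongr_apply]
        rw [Finset.sum_comm, Finset.sum_comm (γ := ι)]
        exact Finset.sum_congr rfl fun σ _ => Equiv.sum_comp σ fun j =>
          Equiv.Perm.sign σ • P (fun i => update X j (A * X j - X j * A) (σ i))

end Extensive

end Matrix

theorem embedAt_eq_piKronecker (d K : ℕ) (r : Fin K) (A : Matrix (Fin d) (Fin d) ℂ) :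
    embedAt d K r A = piKronecker ℂ (Fin K) (Fin d) (update 1 r A) := by
  ext f g
  rw [embedAt, of_apply, piKronecker_apply, ← Finset.mul_prod_erase univ
    (fun s => update (1 : Fin K → Matrix (Fin d) (Fin d) ℂ) r A s (f s) (g s)) (mem_univ r),
    update_self]
  refine congrArg _ (Finset.prod_congr rfl fun s hs => ?_)
  rw [update_of_ne (ne_of_mem_erase hs), Pi.one_apply, one_apply]

theorem antisymT_eq_alternatization (d K : ℕ) (O : Fin K → Matrix (Fin d) (Fin d) ℂ) :
    antisymT d K O = (piKronecker ℂ (Fin K) (Fin d)).alternatization O := by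
  ext f g
  simp only [antisymT, MultilinearMap.alternatization_apply, Matrix.sum_apply, of_apply]
  refine Finset.sum_congr rfl fun σ _ => ?_
  rw [Units.smul_def, Matrix.smul_apply, MultilinearMap.domDomCongr_apply, piKronecker_apply,
    zsmul_eq_mul]

theorem antisymT_commutes_with_extensive_general (d : ℕ)
    (O : Fin (d ^ 2 - 1) → Matrix (Fin d) (Fin d) ℂ)
    (hO0 : ∀ k, O k ≠ 0) (hherm : ∀ k, (O k).IsHermitian)
    (htr : ∀ k, (O k).trace = 0)
    (horth : ∀ k l, k ≠ l → (O k * O l).trace = 0) (k : Fin (d ^ 2 - 1)) :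
    (∑ r, embedAt d (d ^ 2 - 1) r (O k)) * antisymT d (d ^ 2 - 1) O =
      antisymT d (d ^ 2 - 1) O * (∑ r, embedAt d (d ^ 2 - 1) r (O k)) := by
  have hcard : Fintype.card (Fin (d ^ 2 - 1)) + 1 = Fintype.card (Fin d) ^ 2 := by
    have hK := k.pos
    simp only [Fintype.card_fin]
    omega
  set c : Fin (d ^ 2 - 1) → Fin (d ^ 2 - 1) → ℂ := fun l m =>
    ((O k * O l - O l * O k) * O m).trace / (O m * O m).trace
  have hexpand : ∀ l, O k * O l - O l * O k = ∑ m, c l m • O m := fun l =>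
    eq_sum_trace_mul_div_smul_of_trace_eq_zero hO0 hherm htr horth hcard
      (by rw [trace_sub, trace_mul_comm, sub_self])
  have hdiag : ∀ l, c l l = 0 := fun l => by
    simp only [c]
    rw [sub_mul, trace_sub, trace_mul_cycle, sub_self, zero_div]
  rw [← sub_eq_zero, antisymT_eq_alternatization]
  simp only [embedAt_eq_piKronecker]
  rw [sum_piKronecker_update_one_mul_alternatization_sub]
  simp only [hexpand]
  rw [AlternatingMap.sum_map_update_sum_smul, Finset.sum_eq_zero fun l _ => hdiag l, zero_smul]

/-- For any family of nonzero Hermitian, traceless, pairwise Hilbert-Schmidt orthogonal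
`d×d` matrices `O_0, ..., O_{K-1}` with `K = d² - 1`, the totally antisymmetric operator `T`
commutes with every extensive operator `O_k^tot = Σ_r O_k^{(r)}`. -/
theorem antisymT_commutes_with_extensive (d : ℕ) (hd : 2 ≤ d)
    (O : Fin (d ^ 2 - 1) → Matrix (Fin d) (Fin d) ℂ)
    (hO0 : ∀ k, O k ≠ 0) (hherm : ∀ k, (O k).IsHermitian)
    (htr : ∀ k, (O k).trace = 0)
    (horth : ∀ k l, k ≠ l → (O k * O l).trace = 0) (k : Fin (d ^ 2 - 1)) :
    (∑ r, embedAt d (d ^ 2 - 1) r (O k)) * antisymT d (d ^ 2 - 1) O =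
      antisymT d (d ^ 2 - 1) O * (∑ r, embedAt d (d ^ 2 - 1) r (O k)) :=
  antisymT_commutes_with_extensive_general d O hO0 hherm htr horth k
end
end

section
/- Let U be the 8×8 unitary on (ℂ²)^⊗3 given by U = Σ_{n,m ∈ {0,1}} X^n Z^m ⊗ |n⟩⟨n| ⊗ |m⟩⟨m|, where X = σ_x and Z = σ_z act on the first (system) qubit and |0⟩,|1⟩ is the computational basis of each ancilla qubit. Then for every 2×2 matrix ρ with Tr ρ = 1: (i) the partial trace over the two ancilla qubits of U (ρ ⊗ I/2 ⊗ I/2) U† equals I/2 (the system is left maximally mixed), and (ii) the partial trace over the system qubit of U (ρ ⊗ I/2 ⊗ I/2) U† equals (I/2) ⊗ (I/2) (the ancillas are also left maximally mixed). -/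
open Matrix Kronecker

noncomputable section

/-- Rank-one projector `|n⟩⟨n|` onto the `n`-th computational basis state of `ℂ²`. -/
def proj (n : Fin 2) : Matrix (Fin 2) (Fin 2) ℂ :=
  Matrix.of fun i j => if i = n ∧ j = n then 1 else 0

/-- The controlled-Pauli unitary `U = Σ_{n,m} Xⁿ Zᵐ ⊗ |n⟩⟨n| ⊗ |m⟩⟨m|` on three qubits. -/
def Udec : Matrix ((Fin 2 × Fin 2) × Fin 2) ((Fin 2 × Fin 2) × Fin 2) ℂ :=
  ∑ n : Fin 2, ∑ m : Fin 2, (σx ^ (n : ℕ) * σz ^ (m : ℕ)) ⊗ₖ proj n ⊗ₖ proj m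

/-- Partial trace over the two ancilla qubits (second and third factors). -/
def ptraceAnc (M : Matrix ((Fin 2 × Fin 2) × Fin 2) ((Fin 2 × Fin 2) × Fin 2) ℂ) :
    Matrix (Fin 2) (Fin 2) ℂ :=
  Matrix.of fun i j => ∑ b : Fin 2, ∑ c : Fin 2, M ((i, b), c) ((j, b), c)

/-- Partial trace over the system qubit (first factor). -/
def ptraceSys (M : Matrix ((Fin 2 × Fin 2) × Fin 2) ((Fin 2 × Fin 2) × Fin 2) ℂ) :
    Matrix (Fin 2 × Fin 2) (Fin 2 × Fin 2) ℂ :=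
  Matrix.of fun p q => ∑ a : Fin 2, M ((a, p.1), p.2) ((a, q.1), q.2)


/-! `U` is block diagonal in the ancilla basis, so
`U (ρ ⊗ I ⊗ I) U† = Σ_{n,m} Pₙₘ ρ Pₙₘ† ⊗ |n⟩⟨n| ⊗ |m⟩⟨m|` with `Pₙₘ = XⁿZᵐ`.
Tracing out the ancillas leaves the Pauli twirl `Σ Pₙₘ ρ Pₙₘ† = 2 Tr ρ · I`; tracing out the
system leaves the diagonal matrix with entries `Tr (Pₙₘ ρ Pₙₘ†) = Tr ρ`. -/

lemma proj_eq_single (n : Fin 2) : proj n = single n n 1 := by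
  ext i j
  simp [proj, single_apply, eq_comm]

lemma proj_mul_proj (n n' : Fin 2) : proj n * proj n' = if n = n' then proj n else 0 := by
  split_ifs with h
  · subst h
    simp [proj_eq_single]
  · simp [proj_eq_single, h]

lemma conjTranspose_proj (n : Fin 2) : (proj n)ᴴ = proj n := by
  simp [proj_eq_single]

lemma sum_proj : ∑ n, proj n = 1 := by
  ext i j
  fin_cases i <;> fin_cases j <;> simp [proj, Fin.sum_univ_two]

section Controlled

variable {ι : Type*}

def controlled (V : Fin 2 → Fin 2 → Matrix ι ι ℂ) :
    Matrix ((ι × Fin 2) × Fin 2) ((ι × Fin 2) × Fin 2) ℂ :=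
  ∑ n, ∑ m, V n m ⊗ₖ proj n ⊗ₖ proj m

lemma kronecker_proj_mul_kronecker_proj [Fintype ι] (A B : Matrix ι ι ℂ) (n m n' m' : Fin 2) :
    (A ⊗ₖ proj n ⊗ₖ proj m) * (B ⊗ₖ proj n' ⊗ₖ proj m') =
      if n = n' ∧ m = m' then (A * B) ⊗ₖ proj n ⊗ₖ proj m else 0 := by
  rw [← mul_kronecker_mul, ← mul_kronecker_mul, proj_mul_proj, proj_mul_proj]
  split_ifs <;> simp_all

lemma controlled_mul_controlled [Fintype ι] (A B : Fin 2 → Fin 2 → Matrix ι ι ℂ) :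
    controlled A * controlled B = controlled fun n m => A n m * B n m := by
  simp only [controlled, Finset.sum_mul, Finset.mul_sum, kronecker_proj_mul_kronecker_proj]
  simp [ite_and]

lemma conjTranspose_controlled (V : Fin 2 → Fin 2 → Matrix ι ι ℂ) :
    (controlled V)ᴴ = controlled fun n m => (V n m)ᴴ := by
  simp [controlled, conjTranspose_kronecker, conjTranspose_proj]

lemma kronecker_one_one_eq_controlled (ρ : Matrix ι ι ℂ) :
    ρ ⊗ₖ (1 : Matrix (Fin 2) (Fin 2) ℂ) ⊗ₖ (1 : Matrix (Fin 2) (Fin 2) ℂ) =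
      controlled fun _ _ => ρ := by
  rw [← sum_proj, controlled]
  simp only [Fin.sum_univ_two, kronecker_add, add_kronecker]
  abel

lemma controlled_conj_kronecker_one_one [Fintype ι] (V : Fin 2 → Fin 2 → Matrix ι ι ℂ)
    (ρ : Matrix ι ι ℂ) :
    controlled V * (ρ ⊗ₖ (1 : Matrix (Fin 2) (Fin 2) ℂ) ⊗ₖ (1 : Matrix (Fin 2) (Fin 2) ℂ)) *
        (controlled V)ᴴ = controlled fun n m => V n m * ρ * (V n m)ᴴ := by
  rw [kronecker_one_one_eq_controlled, conjTranspose_controlled, controlled_mul_controlled,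
    controlled_mul_controlled]

end Controlled

lemma ptraceAnc_controlled (W : Fin 2 → Fin 2 → Matrix (Fin 2) (Fin 2) ℂ) :
    ptraceAnc (controlled W) = ∑ n, ∑ m, W n m := by
  ext i j
  simp [ptraceAnc, controlled, Matrix.sum_apply, proj, Fin.sum_univ_two]

lemma ptraceSys_controlled (W : Fin 2 → Fin 2 → Matrix (Fin 2) (Fin 2) ℂ) :
    ptraceSys (controlled W) = diagonal fun p => (W p.1 p.2).trace := by
  ext ⟨b, c⟩ ⟨d, e⟩
  fin_cases b <;> fin_cases c <;> fin_cases d <;> fin_cases e <;>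
    simp [ptraceSys, controlled, Matrix.sum_apply, proj, Fin.sum_univ_two, trace]

lemma trace_mul_mul_conjTranspose_of_mem_unitaryGroup {n : Type*} [Fintype n] [DecidableEq n]
    {U : Matrix n n ℂ} (hU : U ∈ unitaryGroup n ℂ) (A : Matrix n n ℂ) :
    (U * A * Uᴴ).trace = A.trace := by
  rw [trace_mul_cycle, ← star_eq_conjTranspose, Unitary.star_mul_self_of_mem hU, one_mul]

def pauli (n m : Fin 2) : Matrix (Fin 2) (Fin 2) ℂ := σx ^ (n : ℕ) * σz ^ (m : ℕ)

lemma Udec_eq_controlled_pauli : Udec = controlled pauli := rfl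

lemma pauli_mem_unitaryGroup (n m : Fin 2) : pauli n m ∈ unitaryGroup (Fin 2) ℂ := by
  rw [mem_unitaryGroup_iff]
  fin_cases n <;> fin_cases m <;> ext i j <;> fin_cases i <;> fin_cases j <;>
    simp [pauli, σx, σz, mul_apply, Fin.sum_univ_two]

lemma sum_pauli_mul_mul_conjTranspose (ρ : Matrix (Fin 2) (Fin 2) ℂ) :
    ∑ n, ∑ m, pauli n m * ρ * (pauli n m)ᴴ = (2 * ρ.trace) • 1 := by
  ext i j
  fin_cases i <;> fin_cases j <;>
    simp [pauli, σx, σz, mul_apply, Fin.sum_univ_two, trace, vecMul, dotProduct] <;> ring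

/-- Applying the controlled-Pauli unitary with two maximally mixed control qubits leaves the
system maximally mixed and also leaves the ancillas maximally mixed. -/
theorem controlled_pauli_decoheres (ρ : Matrix (Fin 2) (Fin 2) ℂ) (hρ : ρ.trace = 1) :
    ptraceAnc (Udec *
        (ρ ⊗ₖ ((2 : ℂ)⁻¹ • (1 : Matrix (Fin 2) (Fin 2) ℂ))
            ⊗ₖ ((2 : ℂ)⁻¹ • (1 : Matrix (Fin 2) (Fin 2) ℂ))) * Udecᴴ) =
      (2 : ℂ)⁻¹ • (1 : Matrix (Fin 2) (Fin 2) ℂ) ∧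
    ptraceSys (Udec *
        (ρ ⊗ₖ ((2 : ℂ)⁻¹ • (1 : Matrix (Fin 2) (Fin 2) ℂ))
            ⊗ₖ ((2 : ℂ)⁻¹ • (1 : Matrix (Fin 2) (Fin 2) ℂ))) * Udecᴴ) =
      ((2 : ℂ)⁻¹ • (1 : Matrix (Fin 2) (Fin 2) ℂ)) ⊗ₖ
        ((2 : ℂ)⁻¹ • (1 : Matrix (Fin 2) (Fin 2) ℂ)) := by
  have hstate : ρ ⊗ₖ ((2 : ℂ)⁻¹ • (1 : Matrix (Fin 2) (Fin 2) ℂ))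
      ⊗ₖ ((2 : ℂ)⁻¹ • (1 : Matrix (Fin 2) (Fin 2) ℂ)) = ((4 : ℂ)⁻¹ • ρ) ⊗ₖ 1 ⊗ₖ 1 := by
    simp only [kronecker_smul, smul_kronecker, smul_smul]
    norm_num
  have htrace : ((4 : ℂ)⁻¹ • ρ).trace = 4⁻¹ := by simp [hρ]
  rw [hstate, Udec_eq_controlled_pauli, controlled_conj_kronecker_one_one, ptraceAnc_controlled,
    ptraceSys_controlled, sum_pauli_mul_mul_conjTranspose]
  simp only [trace_mul_mul_conjTranspose_of_mem_unitaryGroup (pauli_mem_unitaryGroup _ _), htrace]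
  constructor
  · norm_num
  · rw [kronecker_smul, smul_kronecker, smul_smul, one_kronecker_one, smul_one_eq_diagonal]
    norm_num
end
end
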